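/- For the type B metric on ℝ⁴, the curvature operators satisfy R(∂₁,∂₄) = R(∂₂,∂₃) = R(∂₃,∂₄) = 0, where R(X,Y) = ∇_X∇_Y - ∇_Y∇_X on coordinate vector fields. -/

import Mathlib

open Real

noncomputable def pd {n : ℕ} (i : Fin n) (f : (Fin n → ℝ) → ℝ) (p : Fin n → ℝ) : ℝ :=
  fderiv ℝ f p (Pi.single i 1)

noncomputable def gB (μ : ℝ) (p : Fin 4 → ℝ) : Matrix (Fin 4) (Fin 4) ℝ :=
  Matrix.of
    ![![μ, μ/2, exp (-p 0) / 2, exp (-p 1)],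
      ![μ/2, μ, exp (-p 0), exp (-p 1) / 2],
      ![exp (-p 0) / 2, exp (-p 0), 0, 0],
      ![exp (-p 1), exp (-p 1) / 2, 0, 0]]

/-- Koszul characterization of the Christoffel symbols of the Levi-Civita
connection of the type B metric. -/
def IsChristoffelB (μ : ℝ) (Γ : Fin 4 → Fin 4 → Fin 4 → (Fin 4 → ℝ) → ℝ) : Prop :=
  ∀ (i j k : Fin 4) (p : Fin 4 → ℝ),
    (∑ l, gB μ p l k * Γ l i j p) =
      (1/2) * (pd i (fun q => gB μ q j k) p + pd j (fun q => gB μ q i k) p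
        - pd k (fun q => gB μ q i j) p)

/-- Component of R(∂ᵢ,∂ⱼ)∂ₖ along ∂ₘ, with R(X,Y) = ∇_X∇_Y - ∇_Y∇_X on
coordinate vector fields. -/
noncomputable def Riem4 (Γ : Fin 4 → Fin 4 → Fin 4 → (Fin 4 → ℝ) → ℝ)
    (i j k m : Fin 4) (p : Fin 4 → ℝ) : ℝ :=
  pd i (Γ m j k) p - pd j (Γ m i k) p
    + (∑ l, Γ m i l p * Γ l j k p) - (∑ l, Γ m j l p * Γ l i k p)

/-! The metric matrix `gB μ p` has determinant `(9/16) e^{-2x-2y} ≠ 0`, so the Koszul system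
determines the Christoffel symbols uniquely. They are the explicit functions `christoffelB μ`,
from which the three curvature operators are computed directly. -/

section PartialDerivatives

variable {n : ℕ} {i : Fin n} {f g : (Fin n → ℝ) → ℝ} {p : Fin n → ℝ}

lemma pd_const (c : ℝ) : pd i (fun _ => c) p = 0 := by
  simp [pd]

lemma pd_apply (j : Fin n) : pd i (fun q => q j) p = if j = i then 1 else 0 := by
  simp [pd, (hasFDerivAt_apply j p).fderiv, Pi.single_apply]

lemma pd_neg : pd i (fun q => -f q) p = -pd i f p := by
  simp [pd, fderiv_fun_neg]

lemma pd_sub (hf : DifferentiableAt ℝ f p) (hg : DifferentiableAt ℝ g p) :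
    pd i (fun q => f q - g q) p = pd i f p - pd i g p := by
  simp [pd, fderiv_fun_sub hf hg]

lemma pd_const_mul (c : ℝ) (hf : DifferentiableAt ℝ f p) :
    pd i (fun q => c * f q) p = c * pd i f p := by
  simp [pd, fderiv_const_mul hf]

lemma pd_div_const (c : ℝ) (hf : DifferentiableAt ℝ f p) :
    pd i (fun q => f q / c) p = pd i f p / c := by
  simp [div_eq_mul_inv, pd, fderiv_mul_const hf, mul_comm]

lemma pd_exp (hf : DifferentiableAt ℝ f p) :
    pd i (fun q => exp (f q)) p = exp (f p) * pd i f p := by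
  simp [pd, hf.hasFDerivAt.exp.fderiv]

end PartialDerivatives

lemma det_gB (μ : ℝ) (p : Fin 4 → ℝ) :
    (gB μ p).det = 9 / 16 * exp (-p 0) ^ 2 * exp (-p 1) ^ 2 := by
  simp [Matrix.det_succ_row_zero, Fin.sum_univ_succ, gB, Fin.succAbove]
  ring

lemma isUnit_gB (μ : ℝ) (p : Fin 4 → ℝ) : IsUnit (gB μ p) := by
  rw [Matrix.isUnit_iff_isUnit_det, det_gB, isUnit_iff_ne_zero]
  positivity

theorem IsChristoffelB.unique {μ : ℝ} {Γ Γ' : Fin 4 → Fin 4 → Fin 4 → (Fin 4 → ℝ) → ℝ}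
    (h : IsChristoffelB μ Γ) (h' : IsChristoffelB μ Γ') : Γ = Γ' := by
  funext m i j p
  have hv : Matrix.vecMul (fun l => Γ l i j p) (gB μ p) =
      Matrix.vecMul (fun l => Γ' l i j p) (gB μ p) := by
    funext k
    simpa only [Matrix.vecMul, dotProduct, mul_comm] using (h i j k p).trans (h' i j k p).symm
  exact congrFun (Matrix.vecMul_injective_iff_isUnit.mpr (isUnit_gB μ p) hv) m

noncomputable def christoffelB (μ : ℝ) : Fin 4 → Fin 4 → Fin 4 → (Fin 4 → ℝ) → ℝ :=
  ![![![fun _ => 1/3, fun _ => -(1/3), fun _ => 0, fun _ => 0],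
     ![fun _ => -(1/3), fun _ => -(2/3), fun _ => 0, fun _ => 0],
     ![fun _ => 0, fun _ => 0, fun _ => 0, fun _ => 0],
     ![fun _ => 0, fun _ => 0, fun _ => 0, fun _ => 0]],
    ![![fun _ => -(2/3), fun _ => -(1/3), fun _ => 0, fun _ => 0],
     ![fun _ => -(1/3), fun _ => 1/3, fun _ => 0, fun _ => 0],
     ![fun _ => 0, fun _ => 0, fun _ => 0, fun _ => 0],
     ![fun _ => 0, fun _ => 0, fun _ => 0, fun _ => 0]],
    ![![fun q => 2*μ/3 * exp (q 0), fun q => μ/3 * exp (q 0), fun _ => -(2/3),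
        fun q => 2/3 * exp (q 0 - q 1)],
     ![fun q => μ/3 * exp (q 0), fun q => -(μ/3) * exp (q 0), fun _ => -(1/3),
        fun q => 1/3 * exp (q 0 - q 1)],
     ![fun _ => -(2/3), fun _ => -(1/3), fun _ => 0, fun _ => 0],
     ![fun q => 2/3 * exp (q 0 - q 1), fun q => 1/3 * exp (q 0 - q 1), fun _ => 0, fun _ => 0]],
    ![![fun q => -(μ/3) * exp (q 1), fun q => μ/3 * exp (q 1), fun q => 1/3 * exp (q 1 - q 0),
        fun _ => -(1/3)],
     ![fun q => μ/3 * exp (q 1), fun q => 2*μ/3 * exp (q 1), fun q => 2/3 * exp (q 1 - q 0),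
        fun _ => -(2/3)],
     ![fun q => 1/3 * exp (q 1 - q 0), fun q => 2/3 * exp (q 1 - q 0), fun _ => 0, fun _ => 0],
     ![fun _ => -(1/3), fun _ => -(2/3), fun _ => 0, fun _ => 0]]]

lemma isChristoffelB_christoffelB (μ : ℝ) : IsChristoffelB μ (christoffelB μ) := by
  intro i j k p
  fin_cases i <;> fin_cases j <;> fin_cases k <;>
  · simp (disch := fun_prop) only [Fin.reduceFinMk, Fin.sum_univ_four, gB, christoffelB,
      Matrix.of_apply, Matrix.cons_val, pd_const, pd_apply, pd_neg, pd_div_const, pd_exp,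
      Fin.reduceEq, reduceIte]
    simp -failIfUnchanged only [exp_neg, exp_sub]
    field_simp
    ring

lemma riem4_christoffelB_eq_zero (μ : ℝ) (p : Fin 4 → ℝ) (k m : Fin 4) :
    Riem4 (christoffelB μ) 0 3 k m p = 0 ∧ Riem4 (christoffelB μ) 1 2 k m p = 0 ∧
      Riem4 (christoffelB μ) 2 3 k m p = 0 := by
  refine ⟨?_, ?_, ?_⟩ <;> fin_cases k <;> fin_cases m <;>
  · simp (disch := fun_prop) only [Fin.reduceFinMk, Riem4, Fin.sum_univ_four, christoffelB,
      Matrix.cons_val, pd_const, pd_apply, pd_sub, pd_const_mul, pd_exp, Fin.reduceEq, reduceIte]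
    simp -failIfUnchanged only [exp_sub]
    field_simp
    ring

theorem curvature_typeB_vanishing_general (μ : ℝ)
    (Γ : Fin 4 → Fin 4 → Fin 4 → (Fin 4 → ℝ) → ℝ)
    (hΓ : IsChristoffelB μ Γ) :
    ∀ (p : Fin 4 → ℝ) (k m : Fin 4),
      Riem4 Γ 0 3 k m p = 0 ∧ Riem4 Γ 1 2 k m p = 0 ∧ Riem4 Γ 2 3 k m p = 0 := by
  rw [hΓ.unique (isChristoffelB_christoffelB μ)]
  exact riem4_christoffelB_eq_zero μ

/-- For the type B metric, R(∂₁,∂₄) = R(∂₂,∂₃) = R(∂₃,∂₄) = 0. -/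
theorem curvature_typeB_vanishing (μ : ℝ)
    (Γ : Fin 4 → Fin 4 → Fin 4 → (Fin 4 → ℝ) → ℝ)
    (hΓsmooth : ∀ k i j, ContDiff ℝ ⊤ (Γ k i j)) (hΓ : IsChristoffelB μ Γ) :
    ∀ (p : Fin 4 → ℝ) (k m : Fin 4),
      Riem4 Γ 0 3 k m p = 0 ∧ Riem4 Γ 1 2 k m p = 0 ∧ Riem4 Γ 2 3 k m p = 0 :=
  curvature_typeB_vanishing_general μ Γ hΓ
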